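/- arXiv:0906.2031 — 2 statements merged into one kernel-verified Lean document; each statement's English description precedes it below -/
import Mathlib

section
/- Let μ be a Borel probability measure on the s-dimensional torus T^s, let k be an odd natural number, and let P^{(k)}_j be the partition of T^s into cubes of side 2π/k^j. For each atom P, let P̂ be the cube with the same center as P but side 2π/k^{j-1}. Then for every δ > 0 and every j ≥ 1, μ({x : μ(P^{(k)}_j(x)) ≥ δ μ(P̂^{(k)}_j(x))}) ≥ 1 − δ k^s. -/
/- STATEMENT 0: Mañé's partition lemma on the torus (first inequality).
`Torus s` is the `s`-dimensional torus `(ℝ/2πℤ)^s`.  For an odd `k`, `cubeAtom s k j x`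
is the atom of the partition `P^{(k)}_j` of the torus into cubes of side `2π/k^j`
containing `x`, and `hatCube s k j x` is the concentric cube of side `2π/k^{j-1}`
(the union of the `k^s` atoms whose indices differ from that of `x` by at most
`(k-1)/2` in each coordinate, modulo `k^j`). -/

open MeasureTheory Set

noncomputable section

abbrev Torus (s : ℕ) := Fin s → AddCircle (2 * Real.pi)

/-- The canonical representative in `[0, 2π)` of a point of the circle `ℝ/2πℤ`. -/
def circleRep (x : AddCircle (2 * Real.pi)) : ℝ :=
  haveI : Fact ((0:ℝ) < 2 * Real.pi) := ⟨by positivity⟩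
  ((AddCircle.equivIco (2 * Real.pi) 0 x : Set.Ico (0:ℝ) (0 + 2 * Real.pi)) : ℝ)

/-- The index (in `{0, …, k^j - 1}`, as an integer) of the arc of length `2π/k^j`
containing the point `x` of the circle. -/
def cubeIdx (k j : ℕ) (x : AddCircle (2 * Real.pi)) : ℤ :=
  ⌊circleRep x * (k : ℝ) ^ j / (2 * Real.pi)⌋

/-- The atom of the partition `P^{(k)}_j` of the torus into cubes of side `2π/k^j`
containing `x`. -/
def cubeAtom (s k j : ℕ) (x : Torus s) : Set (Torus s) :=
  {y | ∀ i, cubeIdx k j (y i) = cubeIdx k j (x i)}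

/-- The cube `P̂` concentric with the atom of `x`, of side `2π/k^{j-1}` (for odd `k`):
the union of the atoms whose index differs by at most `(k-1)/2` in each coordinate,
modulo `k^j`. -/
def hatCube (s k j : ℕ) (x : Torus s) : Set (Torus s) :=
  {y | ∀ i, ∃ d : ℤ, |d| ≤ ((k : ℤ) - 1) / 2 ∧
    ((cubeIdx k j (y i) : ZMod (k ^ j)) = (cubeIdx k j (x i) : ZMod (k ^ j)) + (d : ZMod (k ^ j)))}

open Finset Pointwise

/-!
Index the atoms of `P^{(k)}_j` by `(ℤ/k^jℤ)^s`; then `P̂(x)` is the union of the atoms whose index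
differs from that of `x` by an element of a fixed set `S` of `k^s` offsets. Call an atom bad if its
mass is less than `δ` times the mass of its hat. Summing the inequality over the bad atoms and
exchanging the sums, each atom is counted once for every hat containing it, i.e. at most `k^s`
times, so the bad atoms carry mass at most `δ k^s`.
-/

theorem sum_filter_lt_mul_sum_le {ι : Type*} [Fintype ι] [DecidableEq ι] (ν : ι → ENNReal)
    (H : ι → Finset ι) (M : ℕ) (hH : ∀ b, #{a | b ∈ H a} ≤ M) (δ : ENNReal) :
    ∑ a with ν a < δ * ∑ b ∈ H a, ν b, ν a ≤ δ * M * ∑ b, ν b := by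
  calc ∑ a with ν a < δ * ∑ b ∈ H a, ν b, ν a
      ≤ ∑ a with ν a < δ * ∑ b ∈ H a, ν b, δ * ∑ b ∈ H a, ν b :=
        sum_le_sum fun a ha => (mem_filter.1 ha).2.le
    _ ≤ ∑ a, δ * ∑ b ∈ H a, ν b := sum_le_sum_of_subset (subset_univ _)
    _ = δ * ∑ b, #{a | b ∈ H a} * ν b := by
        rw [← mul_sum, sum_comm' (t' := univ) (s' := fun b => {a | b ∈ H a})
          (by simp)]
        simp [sum_const, nsmul_eq_mul]
    _ ≤ δ * ∑ b, M * ν b := by gcongr with b; exact_mod_cast hH b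
    _ = δ * M * ∑ b, ν b := by rw [← mul_sum, mul_assoc]

theorem one_sub_mul_le_measure_setOf_mul_measure_preimage_le {X ι : Type*} [MeasurableSpace X]
    [Fintype ι] [DecidableEq ι] (μ : Measure X) [IsProbabilityMeasure μ] (f : X → ι)
    (hf : ∀ a, MeasurableSet (f ⁻¹' {a})) (H : ι → Finset ι) (M : ℕ)
    (hH : ∀ b, #{a | b ∈ H a} ≤ M) (δ : ENNReal) :
    1 - δ * M ≤ μ {x | δ * μ (f ⁻¹' H (f x)) ≤ μ (f ⁻¹' {f x})} := by
  set ν : ι → ENNReal := fun a => μ (f ⁻¹' {a})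
  have hμ (T : Finset ι) : μ (f ⁻¹' T) = ∑ b ∈ T, ν b :=
    (sum_measure_preimage_singleton T fun b _ => hf b).symm
  have htotal : ∑ b, ν b = 1 := by rw [← hμ, coe_univ, preimage_univ, measure_univ]
  have hgood : {x | δ * μ (f ⁻¹' H (f x)) ≤ μ (f ⁻¹' {f x})} =
      f ⁻¹' ↑({a | δ * ∑ b ∈ H a, ν b ≤ ν a} : Finset ι) := by
    ext x; simp [hμ, ν]
  have hbad := sum_filter_lt_mul_sum_le ν H M hH δ
  rw [htotal, mul_one] at hbad
  rw [tsub_le_iff_right, hgood, hμ, ← htotal, ← sum_filter_add_sum_filter_not univ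
    (fun a => δ * ∑ b ∈ H a, ν b ≤ ν a)]
  simp only [not_le]
  gcongr

theorem card_filter_mem_vadd_finset_le {G : Type*} [AddGroup G] [Fintype G] [DecidableEq G]
    (S : Finset G) (b : G) : #{a : G | b ∈ a +ᵥ S} ≤ #S := by
  calc #{a : G | b ∈ a +ᵥ S} ≤ #(S.image (b - ·)) := by
        refine card_le_card fun a ha => ?_
        obtain ⟨c, hc, rfl⟩ := mem_vadd_finset.1 (mem_filter.1 ha).2
        exact mem_image.2 ⟨c, hc, by simp⟩
    _ ≤ #S := card_image_le

theorem circleRep_mem_Ico (x : AddCircle (2 * Real.pi)) :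
    circleRep x ∈ Set.Ico 0 (2 * Real.pi) := by
  have : Fact ((0:ℝ) < 2 * Real.pi) := ⟨by positivity⟩
  simpa [circleRep] using (AddCircle.equivIco (2 * Real.pi) 0 x).2

theorem measurable_cubeIdx (k j : ℕ) : Measurable (cubeIdx k j) := by
  have : Fact ((0:ℝ) < 2 * Real.pi) := ⟨by positivity⟩
  have hrep : Measurable circleRep :=
    measurable_subtype_coe.comp (AddCircle.measurableEquivIco (2 * Real.pi) 0).measurable
  exact ((hrep.mul_const _).div_const _).floor

theorem cubeIdx_mem_Ico {k : ℕ} (hk : k ≠ 0) (j : ℕ) (x : AddCircle (2 * Real.pi)) :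
    cubeIdx k j x ∈ Set.Ico 0 ((k : ℤ) ^ j) := by
  obtain ⟨h0, h2π⟩ := circleRep_mem_Ico x
  have hkj : (0 : ℝ) < (k : ℝ) ^ j := by positivity
  refine ⟨Int.floor_nonneg.2 (by positivity), Int.floor_lt.2 ?_⟩
  rw [div_lt_iff₀ Real.two_pi_pos]
  push_cast
  nlinarith

theorem cubeIdx_cast_eq_iff {k : ℕ} (hk : k ≠ 0) (j : ℕ) (z w : AddCircle (2 * Real.pi)) :
    (cubeIdx k j z : ZMod (k ^ j)) = cubeIdx k j w ↔ cubeIdx k j z = cubeIdx k j w := by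
  obtain ⟨hz0, hzN⟩ := cubeIdx_mem_Ico hk j z
  obtain ⟨hw0, hwN⟩ := cubeIdx_mem_Ico hk j w
  rw [ZMod.intCast_eq_intCast_iff', Nat.cast_pow, Int.emod_eq_of_lt hz0 hzN,
    Int.emod_eq_of_lt hw0 hwN]

def cubeIndex (s k j : ℕ) (x : Torus s) : Fin s → ZMod (k ^ j) :=
  fun i => cubeIdx k j (x i)

theorem measurableSet_cubeIndex_preimage_singleton (s k j : ℕ) (a : Fin s → ZMod (k ^ j)) :
    MeasurableSet (cubeIndex s k j ⁻¹' {a}) := by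
  have : cubeIndex s k j ⁻¹' {a} =
      ⋂ i, (fun y : Torus s => cubeIdx k j (y i)) ⁻¹' {m : ℤ | (m : ZMod (k ^ j)) = a i} := by
    ext y; simp [cubeIndex, funext_iff]
  rw [this]
  exact .iInter fun i =>
    (measurable_cubeIdx k j).comp (measurable_pi_apply i) (Set.to_countable _).measurableSet

theorem cubeAtom_eq_preimage {k : ℕ} (hk : k ≠ 0) (s j : ℕ) (x : Torus s) :
    cubeAtom s k j x = cubeIndex s k j ⁻¹' {cubeIndex s k j x} := by
  ext y
  simp [cubeAtom, cubeIndex, funext_iff, cubeIdx_cast_eq_iff hk]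

def hatOffsets (k j : ℕ) : Finset (ZMod (k ^ j)) :=
  (Finset.Icc (-(((k : ℤ) - 1) / 2)) (((k : ℤ) - 1) / 2)).image (↑)

theorem card_hatOffsets_le (k j : ℕ) : #(hatOffsets k j) ≤ k :=
  Finset.card_image_le.trans (by rw [Int.card_Icc]; omega)

theorem mem_hatCube_iff {s k j : ℕ} {x y : Torus s} :
    y ∈ hatCube s k j x ↔ ∀ i, cubeIndex s k j y i - cubeIndex s k j x i ∈ hatOffsets k j := by
  simp only [hatCube, hatOffsets, Set.mem_ofPred_eq, Finset.mem_image, Finset.mem_Icc, cubeIndex,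
    ← abs_le, eq_sub_iff_add_eq', eq_comm]

theorem mane_partition_lemma_hat_general (s k j : ℕ) (hk : Odd k)
    (μ : Measure (Torus s)) [IsProbabilityMeasure μ] (δ : ENNReal) :
    1 - δ * (k : ENNReal) ^ s ≤
      μ {x : Torus s | δ * μ (hatCube s k j x) ≤ μ (cubeAtom s k j x)} := by
  have hk0 : k ≠ 0 := hk.pos.ne'
  have : NeZero (k ^ j) := ⟨pow_ne_zero j hk0⟩
  set S := Fintype.piFinset fun _ : Fin s => hatOffsets k j
  have hS : #S ≤ k ^ s := by
    rw [Fintype.card_piFinset_const]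
    exact Nat.pow_le_pow_left (card_hatOffsets_le k j) s
  have hhat (x : Torus s) : hatCube s k j x = cubeIndex s k j ⁻¹' ↑(cubeIndex s k j x +ᵥ S) := by
    ext y
    simp only [Set.mem_preimage, Finset.mem_coe, ← Finset.neg_vadd_mem_iff, vadd_eq_add,
      neg_add_eq_sub, S, Fintype.mem_piFinset, Pi.sub_apply, mem_hatCube_iff]
  have key := one_sub_mul_le_measure_setOf_mul_measure_preimage_le μ (cubeIndex s k j)
    (measurableSet_cubeIndex_preimage_singleton s k j) (· +ᵥ S) (k ^ s)
    (fun b => (card_filter_mem_vadd_finset_le S b).trans hS) δ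
  simpa only [hhat, cubeAtom_eq_preimage hk0, Nat.cast_pow] using key

theorem mane_partition_lemma_hat (s k j : ℕ) (hk : Odd k) (hj : 1 ≤ j)
    (μ : Measure (Torus s)) [IsProbabilityMeasure μ] (δ : ENNReal) (hδ : 0 < δ) :
    1 - δ * (k : ENNReal) ^ s ≤
      μ {x : Torus s | δ * μ (hatCube s k j x) ≤ μ (cubeAtom s k j x)} :=
  mane_partition_lemma_hat_general s k j hk μ δ

end
end

section
/- Let f : M → M preserve an ergodic Borel probability μ on a metric space M. Let Ω(r, ρ) ⊆ M (r > 0, ρ > 1) be a Borel set of points x such that: whenever y ∈ B(x, r') for some 0 < r' ≤ r and f^t(y) ∈ B(x, r') for some t > 0, there exists 0 ≤ t₁ < t with f^{t₁}(y) ∈ closure(B(x, ρ r')) ∩ Ω, where Ω ⊆ M is a fixed Borel set. Suppose x ∈ Ω(r, ρ), and let P, P̂ be Borel sets with x ∈ P, P ⊆ B(x, r'') for some r'' ≤ r, closure(B(x, ρ r'')) ⊆ P̂, and μ(P) ≥ δ μ(P̂). Then μ(P̂ ∩ Ω) ≥ δ μ(P̂). -/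
/-!
Between two consecutive visits of an orbit to `P` the return-shadowing property of `x` forces a
visit to `Q = closure (ball x (ρ * r'')) ∩ Ω ⊆ P̂ ∩ Ω`, so along every orbit segment of length `N`
the number of visits to `P` exceeds the number of visits to `Q` by at most one. Integrating and
using invariance of `μ` gives `N μ(P) ≤ N μ(Q) + 1` for all `N`, hence `μ(P) ≤ μ(Q)`.
-/

open MeasureTheory Metric Finset Filter Topology
open scoped ENNReal

theorem card_filter_range_le_card_filter_range_add_one {p q : ℕ → Prop}
    [DecidablePred p] [DecidablePred q]
    (h : ∀ n m, n < m → p n → p m → ∃ k, n ≤ k ∧ k < m ∧ q k) (N : ℕ) :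
    #{n ∈ range N | p n} ≤ #{n ∈ range N | q n} + 1 := by
  set T := {n ∈ range N | p n}
  set T' := {n ∈ T | ∃ m ∈ T, n < m}
  have hT : #T ≤ #T' + 1 := by
    have hlast : #{n ∈ T | ¬ ∃ m ∈ T, n < m} ≤ 1 := by
      refine card_le_one.2 fun a ha b hb => ?_
      simp only [mem_filter, not_exists, not_and, not_lt] at ha hb
      exact le_antisymm (hb.2 a ha.1) (ha.2 b hb.1)
    have hsplit : #T' + #{n ∈ T | ¬ ∃ m ∈ T, n < m} = #T := card_filter_add_card_filter_not _
    omega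
  -- each `p`-time that is not the last one is sent to the first `q`-time after it
  let nextQ (n : ℕ) : ℕ := sInf {k | n ≤ k ∧ q k}
  have nextQ_lt : ∀ n ∈ T, ∀ m ∈ T, n < m → nextQ n < m := by
    intro n hn m hm hnm
    obtain ⟨k, hnk, hkm, hk⟩ := h n m hnm (mem_filter.1 hn).2 (mem_filter.1 hm).2
    exact (Nat.sInf_le (show k ∈ {k | n ≤ k ∧ q k} from ⟨hnk, hk⟩)).trans_lt hkm
  have nextQ_mem : ∀ n ∈ T', n ≤ nextQ n ∧ q (nextQ n) := by
    intro n hn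
    obtain ⟨hnT, m, hmT, hnm⟩ := mem_filter.1 hn
    obtain ⟨k, hnk, -, hk⟩ := h n m hnm (mem_filter.1 hnT).2 (mem_filter.1 hmT).2
    exact Nat.sInf_mem (s := {k | n ≤ k ∧ q k}) ⟨k, hnk, hk⟩
  have hT' : #T' ≤ #{n ∈ range N | q n} := by
    refine card_le_card_of_injOn nextQ (fun n hn => ?_)
      (StrictMonoOn.injOn fun a ha b hb hab => ?_)
    · obtain ⟨hnT, m, hmT, hnm⟩ := mem_filter.1 hn
      refine mem_filter.2 ⟨mem_range.2 ?_, (nextQ_mem n hn).2⟩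
      exact (nextQ_lt n hnT m hmT hnm).trans (mem_range.1 (mem_filter.1 hmT).1)
    · exact (nextQ_lt a (mem_filter.1 ha).1 b (mem_filter.1 hb).1 hab).trans_le (nextQ_mem b hb).1
  omega

open scoped Classical in
theorem MeasureTheory.MeasurePreserving.lintegral_card_visits {α : Type*} [MeasurableSpace α]
    {μ : Measure α} {f : α → α} (hf : MeasurePreserving f μ μ) {A : Set α}
    (hA : MeasurableSet A) (N : ℕ) :
    ∫⁻ y, (#{n ∈ range N | f^[n] y ∈ A} : ℝ≥0∞) ∂μ = N * μ A := by
  have hsum : ∀ y, (#{n ∈ range N | f^[n] y ∈ A} : ℝ≥0∞)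
      = ∑ n ∈ range N, A.indicator 1 (f^[n] y) := by
    intro y
    simp [Set.indicator_apply]
  simp only [hsum]
  rw [lintegral_finsetSum _ fun n _ => by
    exact (measurable_one.indicator hA).comp (hf.iterate n).measurable]
  simp [(hf.iterate _).lintegral_comp (measurable_one.indicator hA), lintegral_indicator_one hA]

theorem ENNReal.le_of_forall_nat_mul_le_mul_add {a b c : ℝ≥0∞} (hc : c ≠ ∞)
    (h : ∀ N : ℕ, N * a ≤ N * b + c) : a ≤ b := by
  have hle : ∀ N : ℕ, 0 < N → a ≤ b + (N : ℝ≥0∞)⁻¹ * c := by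
    intro N hN
    have hN0 : (N : ℝ≥0∞) ≠ 0 := by exact_mod_cast hN.ne'
    calc a = (N : ℝ≥0∞)⁻¹ * (N * a) :=
          (ENNReal.inv_mul_cancel_left hN0 (ENNReal.natCast_ne_top N)).symm
      _ ≤ (N : ℝ≥0∞)⁻¹ * (N * b + c) := by gcongr; exact h N
      _ = b + (N : ℝ≥0∞)⁻¹ * c := by
        rw [mul_add, ENNReal.inv_mul_cancel_left hN0 (ENNReal.natCast_ne_top N)]
  have hlim : Tendsto (fun N : ℕ => b + (N : ℝ≥0∞)⁻¹ * c) atTop (𝓝 b) := by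
    simpa using tendsto_const_nhds.add
      (ENNReal.Tendsto.mul_const ENNReal.tendsto_inv_nat_nhds_zero (Or.inr hc))
  exact ge_of_tendsto hlim ((eventually_gt_atTop 0).mono hle)

open scoped Classical in
theorem MeasureTheory.MeasurePreserving.measure_le_of_forall_return_hits {α : Type*}
    [MeasurableSpace α] {μ : Measure α} [IsFiniteMeasure μ] {f : α → α}
    (hf : MeasurePreserving f μ μ) {P Q : Set α} (hP : MeasurableSet P) (hQ : MeasurableSet Q)
    (h : ∀ y t, 0 < t → y ∈ P → f^[t] y ∈ P → ∃ t₁ < t, f^[t₁] y ∈ Q) : μ P ≤ μ Q := by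
  refine ENNReal.le_of_forall_nat_mul_le_mul_add (measure_ne_top μ Set.univ) fun N => ?_
  have hcount : ∀ y, #{n ∈ range N | f^[n] y ∈ P} ≤ #{n ∈ range N | f^[n] y ∈ Q} + 1 := by
    refine fun y => card_filter_range_le_card_filter_range_add_one (fun n m hnm hn hm => ?_) N
    have hreturn : f^[m - n] (f^[n] y) ∈ P := by
      rwa [← Function.iterate_add_apply, Nat.sub_add_cancel hnm.le]
    obtain ⟨t₁, ht₁, hQ⟩ := h (f^[n] y) (m - n) (by omega) hn hreturn
    exact ⟨t₁ + n, by omega, by omega, by rwa [Function.iterate_add_apply]⟩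
  calc (N : ℝ≥0∞) * μ P = ∫⁻ y, (#{n ∈ range N | f^[n] y ∈ P} : ℝ≥0∞) ∂μ :=
        (hf.lintegral_card_visits hP N).symm
    _ ≤ ∫⁻ y, ((#{n ∈ range N | f^[n] y ∈ Q} : ℝ≥0∞) + 1) ∂μ :=
        lintegral_mono fun y => (Nat.cast_le.2 (hcount y)).trans_eq (Nat.cast_succ _)
    _ = N * μ Q + μ Set.univ := by
        rw [lintegral_add_right _ measurable_const, hf.lintegral_card_visits hQ, lintegral_const,
          one_mul]

theorem lerg_general {M : Type*} [MetricSpace M]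
    [MeasurableSpace M] [BorelSpace M]
    (f : M → M)
    (μ : Measure M) [IsProbabilityMeasure μ]
    (hinv : MeasurePreserving f μ μ)
    (Ω : Set M) (hΩ : MeasurableSet Ω)
    (r ρ : ℝ)
    (x : M)
    (hx : ∀ (y : M) (r' : ℝ) (t : ℕ), 0 < r' → r' ≤ r → y ∈ ball x r' → 0 < t →
      f^[t] y ∈ ball x r' →
      ∃ t₁, t₁ < t ∧ f^[t₁] y ∈ closure (ball x (ρ * r')) ∩ Ω)
    (P Phat : Set M) (hPm : MeasurableSet P)
    (δ : ENNReal)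
    (r'' : ℝ) (hr'' : r'' ≤ r)
    (hxP : x ∈ P) (hPball : P ⊆ ball x r'')
    (hball : closure (ball x (ρ * r'')) ⊆ Phat)
    (hδP : δ * μ Phat ≤ μ P) :
    δ * μ Phat ≤ μ (Phat ∩ Ω) := by
  have hr''pos : 0 < r'' := pos_of_mem_ball (hPball hxP)
  calc δ * μ Phat ≤ μ P := hδP
    _ ≤ μ (closure (ball x (ρ * r'')) ∩ Ω) :=
        hinv.measure_le_of_forall_return_hits hPm (isClosed_closure.measurableSet.inter hΩ)
          fun y t ht hy hty => hx y r'' t hr''pos hr'' (hPball hy) ht (hPball hty)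
    _ ≤ μ (Phat ∩ Ω) := measure_mono (Set.inter_subset_inter_left Ω hball)

theorem lerg {M : Type*} [MetricSpace M] [CompactSpace M]
    [MeasurableSpace M] [BorelSpace M]
    (f : M → M) (hf : Measurable f)
    (μ : Measure M) [IsProbabilityMeasure μ]
    (hinv : MeasurePreserving f μ μ) (herg : Ergodic f μ)
    (Ω : Set M) (hΩ : MeasurableSet Ω)
    (r ρ : ℝ) (hr : 0 < r) (hρ : 1 < ρ)
    (x : M)
    (hx : ∀ (y : M) (r' : ℝ) (t : ℕ), 0 < r' → r' ≤ r → y ∈ ball x r' → 0 < t →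
      f^[t] y ∈ ball x r' →
      ∃ t₁, t₁ < t ∧ f^[t₁] y ∈ closure (ball x (ρ * r')) ∩ Ω)
    (P Phat : Set M) (hPm : MeasurableSet P) (hPhatm : MeasurableSet Phat)
    (δ : ENNReal)
    (r'' : ℝ) (hr'' : r'' ≤ r)
    (hxP : x ∈ P) (hPball : P ⊆ ball x r'')
    (hball : closure (ball x (ρ * r'')) ⊆ Phat)
    (hδP : δ * μ Phat ≤ μ P) :
    δ * μ Phat ≤ μ (Phat ∩ Ω) :=
  lerg_general f μ hinv Ω hΩ r ρ x hx P Phat hPm δ r'' hr'' hxP hPball hball hδP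
end
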